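/- Let P_X be a pmf supported on 𝒳={x_1,…,x_n} with p_1 ≥ p_2 ≥ … ≥ p_n > 0 where p_i=P_X(x_i), and let k be an integer with 1 ≤ k < n. Then the minimal expected log-loss under k guesses equals ME_1^{(k)}(P_X) = H(X) − H(p_1,…,p_{s*−1}, Σ_{i=s*}^{n} p_i) − (Σ_{i=s*}^{n} p_i)·log(k−s*+1), where s* = min{ r∈{1,…,k} : (k−r+1)·p_r ≤ Σ_{i=r}^{n} p_i }, H(X)=Σ_{i=1}^n p_i log(1/p_i) is the Shannon entropy of P_X, and H(q_1,…,q_m)=Σ_{j=1}^m q_j log(1/q_j). -/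

import Mathlib

/-!
Only the coverage profile `c x = Q(x is covered)` of a strategy matters. Every profile satisfies
`0 ≤ c ≤ 1` and `∑ c ≤ k`; conversely every `c ∈ [0,1]^𝒳` with `∑ c = k` is a profile, because it
is a convex combination of indicators of `k`-subsets (the vertices of the hypersimplex), and each
of those is realized by deterministically guessing the subset.

Minimizing `∑ p log (1/c)` over these profiles is a water-filling problem. The optimum `c*` covers
the `s* - 1` most likely symbols surely and the others with probability `p x / θ`, where the level
`θ = (∑_{i ≥ s*} p_i) / (k - s* + 1)` makes `∑ c* = k`. The minimality of `s*` gives `θ ≤ p_i` for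
`i < s*`, and its defining inequality gives `c* ≤ 1`. Optimality then follows from
`log t ≤ t - 1`, which reduces it to `∑ p c / c* ≤ ∑ p`.
-/

open Finset

/-- A probability mass function on a finite type. -/
def IsPMF {α : Type*} [Fintype α] (p : α → ℝ) : Prop :=
  (∀ a, 0 ≤ p a) ∧ ∑ a, p a = 1

open Classical in
/-- The probability that a `k`-guess strategy `Q` covers `u`, i.e. the probability that some
guess equals `u`. -/
noncomputable def coversG {U : Type*} [Fintype U] {k : ℕ} (Q : (Fin k → U) → ℝ) (u : U) : ℝ :=
  ∑ a : Fin k → U, if ∃ j, a j = u then Q a else 0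

/-- The log-loss `ℓ_1(q) = log (1/q)`, valued in `EReal` so that `ℓ_1(0) = ⊤`. -/
noncomputable def logLossE (q : ℝ) : EReal :=
  if q = 0 then ⊤ else ((Real.log (1 / q) : ℝ) : EReal)

/-- `s* = min{ r ∈ {1,…,k} : (k−r+1) p_r ≤ ∑_{i=r}^n p_i }`. -/
noncomputable def sstar1 (p : ℕ → ℝ) (k n : ℕ) : ℕ :=
  sInf {r : ℕ | 1 ≤ r ∧ r ≤ k ∧
    ((k : ℝ) - r + 1) * p r ≤ ∑ i ∈ Finset.Icc r n, p i}

/-- `H(X) − H(p_1,…,p_{s*−1}, ∑_{i=s*}^n p_i) − (∑_{i=s*}^n p_i) log (k−s*+1)`. -/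
noncomputable def MElog (p : ℕ → ℝ) (k n : ℕ) : ℝ :=
  (∑ i ∈ Finset.Icc 1 n, p i * Real.log (1 / p i)) -
    ((∑ i ∈ Finset.Icc 1 (sstar1 p k n - 1), p i * Real.log (1 / p i)) +
      (∑ i ∈ Finset.Icc (sstar1 p k n) n, p i) *
        Real.log (1 / ∑ i ∈ Finset.Icc (sstar1 p k n) n, p i)) -
    (∑ i ∈ Finset.Icc (sstar1 p k n) n, p i) *
      Real.log ((k : ℝ) - (sstar1 p k n : ℕ) + 1)

section Transfer

variable {ι : Type*} [DecidableEq ι]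

/-- Moves mass from coordinate `j` to coordinate `i` until `q i = 1` or `q j = 0`. -/
noncomputable def transfer (q : ι → ℝ) (i j : ι) : ι → ℝ :=
  q + min (1 - q i) (q j) • (Pi.single i 1 - Pi.single j 1)

variable {q : ι → ℝ} {i j : ι}

theorem transfer_apply (hij : i ≠ j) (x : ι) :
    transfer q i j x = if x = i then q i + min (1 - q i) (q j)
      else if x = j then q j - min (1 - q i) (q j) else q x := by
  by_cases hxi : x = i
  · subst hxi
    simp [transfer, hij]
  by_cases hxj : x = j
  · subst hxj
    simp [transfer, Ne.symm hij, sub_eq_add_neg]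
  simp [transfer, hxi, hxj]

theorem sum_transfer [Fintype ι] : ∑ x, transfer q i j x = ∑ x, q x := by
  simp [transfer, sum_add_distrib, ← mul_sum]

theorem transfer_mem_Icc (hij : i ≠ j) (hq : ∀ x, q x ∈ Set.Icc 0 1) (x : ι) :
    transfer q i j x ∈ Set.Icc 0 1 := by
  have := hq i; have := hq j; have := hq x
  have := min_le_left (1 - q i) (q j); have := min_le_right (1 - q i) (q j)
  have := le_min (sub_nonneg.2 (hq i).2) (hq j).1
  rw [transfer_apply hij]
  simp only [Set.mem_Icc] at *
  split_ifs <;> constructor <;> linarith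

end Transfer

section Hypersimplex

variable {ι : Type*} [Fintype ι] {q : ι → ℝ}

noncomputable def fractionalCoords (q : ι → ℝ) : Finset ι :=
  univ.filter fun i => q i ≠ 0 ∧ q i ≠ 1

theorem mem_fractionalCoords {i : ι} : i ∈ fractionalCoords q ↔ q i ≠ 0 ∧ q i ≠ 1 := by
  simp [fractionalCoords]

theorem mem_Ioo_of_mem_fractionalCoords (hq : ∀ x, q x ∈ Set.Icc 0 1) {i : ι}
    (hi : i ∈ fractionalCoords q) : q i ∈ Set.Ioo 0 1 := by
  obtain ⟨h0, h1⟩ := mem_fractionalCoords.1 hi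
  exact ⟨(hq i).1.lt_of_ne' h0, (hq i).2.lt_of_ne h1⟩

theorem eq_indicator_of_fractionalCoords_eq_empty (h : fractionalCoords q = ∅) :
    q = ((univ.filter fun i => q i = 1 : Finset ι) : Set ι).indicator 1 := by
  funext i
  have hi : q i = 0 ∨ q i = 1 := by
    by_contra! hi
    simp [← mem_fractionalCoords, h] at hi
  rcases hi with hi | hi <;> simp [hi]

theorem exists_ne_of_fractionalCoords_nonempty {k : ℕ} (hq : ∀ i, q i ∈ Set.Icc 0 1)
    (hsum : ∑ i, q i = k) (hne : (fractionalCoords q).Nonempty) :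
    ∃ i ∈ fractionalCoords q, ∃ j ∈ fractionalCoords q, i ≠ j := by
  classical
  obtain ⟨i, hi⟩ := hne
  by_contra! hsingle
  have hrest : ∀ j ∈ univ.erase i, q j = if q j = 1 then 1 else 0 := by
    intro j hj
    have : j ∉ fractionalCoords q := fun hj' => (mem_erase.1 hj).1 (hsingle _ hi _ hj').symm
    rw [mem_fractionalCoords, not_and_or, not_not, not_not] at this
    rcases this with h | h <;> simp [h]
  have hqi : q i = k - ((univ.erase i).filter fun j => q j = 1).card := by
    rw [← hsum, ← add_sum_erase _ _ (mem_univ i), sum_congr rfl hrest, sum_boole]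
    ring
  obtain ⟨hlt, hgt⟩ := mem_Ioo_of_mem_fractionalCoords hq hi
  rw [hqi, sub_pos] at hlt
  rw [hqi, sub_lt_iff_lt_add'] at hgt
  norm_cast at hlt hgt
  omega

theorem fractionalCoords_transfer_ssubset [DecidableEq ι] {i j : ι} (hij : i ≠ j)
    (hi : i ∈ fractionalCoords q) (hj : j ∈ fractionalCoords q) :
    fractionalCoords (transfer q i j) ⊂ fractionalCoords q := by
  have hsub : fractionalCoords (transfer q i j) ⊆ fractionalCoords q := by
    intro x hx
    by_cases hxij : x = i ∨ x = j
    · rcases hxij with rfl | rfl <;> assumption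
    push Not at hxij
    simpa [mem_fractionalCoords, transfer_apply hij, hxij] using hx
  refine ssubset_of_subset_of_ne hsub fun heq => ?_
  rcases min_choice (1 - q i) (q j) with h | h
  · have : i ∉ fractionalCoords (transfer q i j) := by
      simp [mem_fractionalCoords, transfer_apply hij, h]
    exact this (heq ▸ hi)
  · have : j ∉ fractionalCoords (transfer q i j) := by
      simp [mem_fractionalCoords, transfer_apply hij, h, Ne.symm hij]
    exact this (heq ▸ hj)

theorem mem_convexHull_indicator_of_sum_eq {k : ℕ} (hq : ∀ i, q i ∈ Set.Icc 0 1)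
    (hsum : ∑ i, q i = k) :
    q ∈ convexHull ℝ ((fun A : Finset ι => (A : Set ι).indicator 1) '' {A | A.card = k}) := by
  classical
  induction hN : (fractionalCoords q).card using Nat.strong_induction_on generalizing q with
  | _ N ih =>
  rcases (fractionalCoords q).eq_empty_or_nonempty with h0 | hne
  · rw [eq_indicator_of_fractionalCoords_eq_empty h0] at hsum ⊢
    refine subset_convexHull ℝ _ ⟨_, ?_, rfl⟩
    simp [Set.indicator_apply] at hsum
    exact_mod_cast hsum
  obtain ⟨i, hi, j, hj, hij⟩ := exists_ne_of_fractionalCoords_nonempty hq hsum hne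
  have hmem {i j} (hij : i ≠ j) (hi : i ∈ fractionalCoords q) (hj : j ∈ fractionalCoords q) :
      transfer q i j ∈ convexHull ℝ _ :=
    ih _ (hN ▸ card_lt_card (fractionalCoords_transfer_ssubset hij hi hj))
      (transfer_mem_Icc hij hq) (sum_transfer.trans hsum) rfl
  set a := min (1 - q j) (q i)
  set b := min (1 - q i) (q j)
  have ha : 0 < a := lt_min (sub_pos.2 (mem_Ioo_of_mem_fractionalCoords hq hj).2)
    (mem_Ioo_of_mem_fractionalCoords hq hi).1
  have hb : 0 < b := lt_min (sub_pos.2 (mem_Ioo_of_mem_fractionalCoords hq hi).2)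
    (mem_Ioo_of_mem_fractionalCoords hq hj).1
  have hcomb : (a / (a + b)) • transfer q i j + (b / (a + b)) • transfer q j i = q := by
    funext x
    simp only [transfer, Pi.add_apply, Pi.smul_apply, Pi.sub_apply, smul_eq_mul]
    field_simp
    ring
  rw [← hcomb]
  exact convex_convexHull ℝ _ (hmem hij hi hj) (hmem hij.symm hj hi) (by positivity)
    (by positivity) (by field_simp)

end Hypersimplex
section Coverage

variable {U : Type*} [Fintype U] {k : ℕ} {Q : (Fin k → U) → ℝ}

theorem coversG_nonneg (hQ : IsPMF Q) (u : U) : 0 ≤ coversG Q u :=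
  sum_nonneg fun a _ => by split_ifs <;> simp [hQ.1 a]

theorem coversG_le_one (hQ : IsPMF Q) (u : U) : coversG Q u ≤ 1 :=
  hQ.2 ▸ sum_le_sum fun a _ => by split_ifs <;> simp [hQ.1 a]

theorem sum_coversG_le (hQ : IsPMF Q) : ∑ u, coversG Q u ≤ k := by
  classical
  have hcard (a : Fin k → U) : (univ.filter fun u => ∃ j, a j = u).card ≤ k := by
    calc _ ≤ (univ.image a).card := card_le_card fun u => by simp
      _ ≤ k := by simpa using card_image_le (s := univ) (f := a)
  calc ∑ u, coversG Q u = ∑ a, (univ.filter fun u => ∃ j, a j = u).card * Q a := by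
        simp only [coversG]
        rw [sum_comm]
        refine sum_congr rfl fun a _ => ?_
        rw [← sum_filter, sum_const, nsmul_eq_mul]
    _ ≤ ∑ a, k * Q a := sum_le_sum fun a _ => by gcongr; exacts [hQ.1 a, hcard a]
    _ = k := by rw [← mul_sum, hQ.2, mul_one]

theorem coversG_smul_add_smul (a b : ℝ) (Q₁ Q₂ : (Fin k → U) → ℝ) :
    coversG (a • Q₁ + b • Q₂) = a • coversG Q₁ + b • coversG Q₂ := by
  funext u
  simp only [coversG, Pi.add_apply, Pi.smul_apply, smul_eq_mul, mul_sum, ← sum_add_distrib]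
  refine sum_congr rfl fun x _ => ?_
  split_ifs <;> simp

theorem coversG_single [DecidableEq U] (e : Fin k → U) :
    coversG (Pi.single e 1 : (Fin k → U) → ℝ) = (Set.range e).indicator 1 := by
  funext u
  rw [coversG, sum_eq_single e (fun a _ ha => by simp [ha]) (by simp)]
  simp [Set.indicator_apply]

theorem convex_setOf_coversG :
    Convex ℝ {c : U → ℝ | ∃ Q : (Fin k → U) → ℝ, IsPMF Q ∧ coversG Q = c} := by
  rintro _ ⟨Q₁, hQ₁, rfl⟩ _ ⟨Q₂, hQ₂, rfl⟩ a b ha hb hab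
  refine ⟨a • Q₁ + b • Q₂, ⟨fun x => ?_, ?_⟩, coversG_smul_add_smul a b Q₁ Q₂⟩
  · have := hQ₁.1 x; have := hQ₂.1 x
    simp only [Pi.add_apply, Pi.smul_apply, smul_eq_mul]
    positivity
  · simp [sum_add_distrib, ← mul_sum, hQ₁.2, hQ₂.2, hab]

theorem exists_isPMF_coversG_eq {c : U → ℝ} (hc : ∀ u, c u ∈ Set.Icc 0 1)
    (hsum : ∑ u, c u = k) :
    ∃ Q : (Fin k → U) → ℝ, IsPMF Q ∧ coversG Q = c := by
  classical
  refine convexHull_min ?_ convex_setOf_coversG (mem_convexHull_indicator_of_sum_eq hc hsum)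
  rintro _ ⟨A, hA, rfl⟩
  subst hA
  refine ⟨Pi.single (Subtype.val ∘ A.equivFin.symm) 1, ⟨fun a => ?_, by simp⟩, ?_⟩
  · by_cases h : a = Subtype.val ∘ A.equivFin.symm <;> simp [h]
  · rw [coversG_single, Set.range_comp, Equiv.range_eq_univ, Set.image_univ, Subtype.range_coe]

end Coverage

theorem EReal.coe_finset_sum {α : Type*} (s : Finset α) (f : α → ℝ) :
    ((∑ i ∈ s, f i : ℝ) : EReal) = ∑ i ∈ s, (f i : EReal) :=
  map_sum (⟨⟨((↑) : ℝ → EReal), EReal.coe_zero⟩, EReal.coe_add⟩ : ℝ →+ EReal) f s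

section LogLoss

variable {U : Type*} [Fintype U] {w c : U → ℝ}

theorem logLossE_nonneg {q : ℝ} (hq : q ∈ Set.Icc 0 1) : 0 ≤ logLossE q := by
  unfold logLossE
  split_ifs with h
  · exact le_top
  · exact_mod_cast Real.log_nonneg (one_le_one_div (hq.1.lt_of_ne' h) hq.2)

theorem sum_mul_logLossE_of_ne_zero (hc : ∀ u, c u ≠ 0) :
    ∑ u, (w u : EReal) * logLossE (c u) = ((∑ u, w u * Real.log (1 / c u) : ℝ) : EReal) := by
  rw [EReal.coe_finset_sum]
  exact sum_congr rfl fun u _ => by rw [logLossE, if_neg (hc u), EReal.coe_mul]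

theorem sum_mul_logLossE_eq_top (hw : ∀ u, 0 < w u) (hc : ∀ u, c u ∈ Set.Icc 0 1) {u₀ : U}
    (hu₀ : c u₀ = 0) : ∑ u, (w u : EReal) * logLossE (c u) = ⊤ := by
  classical
  have hrest : 0 ≤ ∑ u ∈ univ.erase u₀, (w u : EReal) * logLossE (c u) :=
    sum_nonneg fun u _ => mul_nonneg (EReal.coe_nonneg.2 (hw u).le) (logLossE_nonneg (hc u))
  rw [← add_sum_erase _ _ (mem_univ u₀), logLossE, if_pos hu₀,
    EReal.coe_mul_top_of_pos (hw u₀)]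
  exact EReal.top_add_of_ne_bot (ne_bot_of_le_ne_bot EReal.zero_ne_bot hrest)

theorem coe_le_sum_mul_logLossE {V : ℝ} (hw : ∀ u, 0 < w u) (hc : ∀ u, c u ∈ Set.Icc 0 1)
    (hV : (∀ u, 0 < c u) → V ≤ ∑ u, w u * Real.log (1 / c u)) :
    (V : EReal) ≤ ∑ u, (w u : EReal) * logLossE (c u) := by
  by_cases h : ∃ u, c u = 0
  · obtain ⟨u, hu⟩ := h
    rw [sum_mul_logLossE_eq_top hw hc hu]
    exact le_top
  · push Not at h
    rw [sum_mul_logLossE_of_ne_zero h]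
    exact EReal.coe_le_coe_iff.2 (hV fun u => (hc u).1.lt_of_ne' (h u))

end LogLoss

theorem sum_mul_log_inv_le_of_sum_mul_div_le {ι : Type*} {s : Finset ι} {w c c' : ι → ℝ}
    (hw : ∀ i ∈ s, 0 ≤ w i) (hc : ∀ i ∈ s, 0 < c i) (hc' : ∀ i ∈ s, 0 < c' i)
    (h : ∑ i ∈ s, w i * (c i / c' i) ≤ ∑ i ∈ s, w i) :
    ∑ i ∈ s, w i * Real.log (1 / c' i) ≤ ∑ i ∈ s, w i * Real.log (1 / c i) := by
  have hterm : ∀ i ∈ s, w i * Real.log (1 / c' i) - w i * Real.log (1 / c i)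
      ≤ w i * (c i / c' i) - w i := by
    intro i hi
    have hlog := Real.log_le_sub_one_of_pos (div_pos (hc i hi) (hc' i hi))
    rw [Real.log_div (hc i hi).ne' (hc' i hi).ne'] at hlog
    rw [one_div, one_div, Real.log_inv, Real.log_inv]
    nlinarith [mul_le_mul_of_nonneg_left hlog (hw i hi)]
  have := sum_le_sum hterm
  rw [sum_sub_distrib, sum_sub_distrib] at this
  linarith

section CappedProfile

variable {ι : Type*} [DecidableEq ι] {w : ι → ℝ} {H : Finset ι} {θ : ℝ}

noncomputable def cappedProfile (w : ι → ℝ) (H : Finset ι) (θ : ℝ) (i : ι) : ℝ :=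
  if i ∈ H then 1 else w i / θ

theorem cappedProfile_pos (hw : ∀ i ∉ H, 0 < w i) (hθ : 0 < θ) (i : ι) :
    0 < cappedProfile w H θ i := by
  unfold cappedProfile
  split_ifs with hi
  · exact one_pos
  · exact div_pos (hw i hi) hθ

theorem cappedProfile_mem_Icc (hw : ∀ i ∉ H, 0 ≤ w i) (hθ : 0 < θ) (hHc : ∀ i ∉ H, w i ≤ θ)
    (i : ι) : cappedProfile w H θ i ∈ Set.Icc 0 1 := by
  unfold cappedProfile
  split_ifs with hi
  · simp
  · exact ⟨div_nonneg (hw i hi) hθ.le, (div_le_one hθ).2 (hHc i hi)⟩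

variable [Fintype ι]

theorem sum_cappedProfile :
    ∑ i, cappedProfile w H θ i = H.card + (∑ i ∈ Hᶜ, w i) / θ := by
  rw [← sum_add_sum_compl H, sum_div]
  congr 1
  · simp +contextual [cappedProfile]
  · exact sum_congr rfl fun i hi => by simp [cappedProfile, mem_compl.1 hi]

theorem sum_mul_log_inv_cappedProfile (hw : ∀ i ∉ H, w i ≠ 0) (hθ : θ ≠ 0) :
    ∑ i, w i * Real.log (1 / cappedProfile w H θ i)
      = ∑ i ∈ Hᶜ, w i * Real.log (1 / w i) + (∑ i ∈ Hᶜ, w i) * Real.log θ := by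
  rw [← sum_add_sum_compl H, sum_mul, ← sum_add_distrib]
  rw [sum_eq_zero fun i hi => by simp [cappedProfile, hi], zero_add]
  refine sum_congr rfl fun i hi => ?_
  rw [mem_compl] at hi
  rw [cappedProfile, if_neg hi, one_div_div, Real.log_div hθ (hw i hi), one_div, Real.log_inv]
  ring

theorem sum_mul_div_cappedProfile_le {c : ι → ℝ} (hw : ∀ i ∉ H, w i ≠ 0) (hθ : 0 < θ)
    (hH : ∀ i ∈ H, θ ≤ w i) (hc : ∀ i ∈ H, c i ≤ 1)
    (hsum : ∑ i, c i ≤ H.card + (∑ i ∈ Hᶜ, w i) / θ) :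
    ∑ i, w i * (c i / cappedProfile w H θ i) ≤ ∑ i, w i := by
  have hhead : ∑ i ∈ H, w i * (c i / cappedProfile w H θ i) = ∑ i ∈ H, w i * c i :=
    sum_congr rfl fun i hi => by simp [cappedProfile, hi]
  have htail : ∑ i ∈ Hᶜ, w i * (c i / cappedProfile w H θ i) = θ * ∑ i ∈ Hᶜ, c i := by
    rw [mul_sum]
    refine sum_congr rfl fun i hi => ?_
    rw [mem_compl] at hi
    simp only [cappedProfile, if_neg hi]
    field_simp [hw i hi]
  have hslack : ∑ i ∈ H, θ * (1 - c i) ≤ ∑ i ∈ H, w i * (1 - c i) :=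
    sum_le_sum fun i hi => mul_le_mul_of_nonneg_right (hH i hi) (sub_nonneg.2 (hc i hi))
  have hθslack : ∑ i ∈ H, θ * (1 - c i) = θ * H.card - θ * ∑ i ∈ H, c i := by
    simp only [mul_sub, sum_sub_distrib, ← mul_sum, mul_one, sum_const, nsmul_eq_mul]
    ring
  have hwH : ∑ i ∈ H, w i * c i + ∑ i ∈ H, w i * (1 - c i) = ∑ i ∈ H, w i := by
    rw [← sum_add_distrib]
    exact sum_congr rfl fun i _ => by ring
  have hθsum := mul_le_mul_of_nonneg_left hsum hθ.le
  rw [← sum_add_sum_compl H c, mul_add, mul_add, mul_div_cancel₀ _ hθ.ne'] at hθsum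
  rw [← sum_add_sum_compl H, ← sum_add_sum_compl H w, hhead, htail]
  linarith

theorem sum_mul_log_inv_cappedProfile_le {c : ι → ℝ} (hw : ∀ i, 0 < w i) (hθ : 0 < θ)
    (hH : ∀ i ∈ H, θ ≤ w i) (hc : ∀ i, c i ∈ Set.Ioc 0 1)
    (hsum : ∑ i, c i ≤ H.card + (∑ i ∈ Hᶜ, w i) / θ) :
    ∑ i, w i * Real.log (1 / cappedProfile w H θ i) ≤ ∑ i, w i * Real.log (1 / c i) :=
  sum_mul_log_inv_le_of_sum_mul_div_le (fun i _ => (hw i).le) (fun i _ => (hc i).1)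
    (fun i _ => cappedProfile_pos (fun i _ => hw i) hθ i)
    (sum_mul_div_cappedProfile_le (fun i _ => (hw i).ne') hθ hH (fun i _ => (hc i).2) hsum)

theorem isLeast_expectedLogLoss_cappedProfile {k : ℕ} (hw : ∀ i, 0 < w i) (hθ : 0 < θ)
    (hH : ∀ i ∈ H, θ ≤ w i) (hHc : ∀ i ∉ H, w i ≤ θ)
    (hk : H.card + (∑ i ∈ Hᶜ, w i) / θ = k) :
    IsLeast {v : EReal | ∃ Q : (Fin k → ι) → ℝ, IsPMF Q ∧
        v = ∑ x, (w x : EReal) * logLossE (coversG Q x)}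
      ((∑ i, w i * Real.log (1 / cappedProfile w H θ i) : ℝ) : EReal) := by
  constructor
  · obtain ⟨Q, hQ, hcov⟩ := exists_isPMF_coversG_eq
      (cappedProfile_mem_Icc (fun i _ => (hw i).le) hθ hHc) (sum_cappedProfile.trans hk)
    refine ⟨Q, hQ, ?_⟩
    rw [hcov, sum_mul_logLossE_of_ne_zero fun i =>
      (cappedProfile_pos (fun i _ => hw i) hθ i).ne']
  · rintro _ ⟨Q, hQ, rfl⟩
    refine coe_le_sum_mul_logLossE hw (fun u => ⟨coversG_nonneg hQ u, coversG_le_one hQ u⟩)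
      fun hpos => ?_
    exact sum_mul_log_inv_cappedProfile_le hw hθ hH (fun u => ⟨hpos u, coversG_le_one hQ u⟩)
      (hk ▸ sum_coversG_le hQ)

end CappedProfile

theorem sum_Icc_one_add_sum_Icc {M : Type*} [AddCommMonoid M] (f : ℕ → M) {s n : ℕ}
    (hs : 1 ≤ s) (hsn : s ≤ n + 1) :
    ∑ i ∈ Icc 1 (s - 1), f i + ∑ i ∈ Icc s n, f i = ∑ i ∈ Icc 1 n, f i := by
  obtain ⟨r, rfl⟩ : ∃ r, s = r + 1 := ⟨s - 1, by omega⟩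
  show ∑ i ∈ Icc (0 + 1) r, f i + ∑ i ∈ Icc (r + 1) n, f i = ∑ i ∈ Icc (0 + 1) n, f i
  simp only [Icc_add_one_left_eq_Ioc]
  exact sum_Ioc_consecutive f (Nat.zero_le r) (by omega)

theorem sum_compl_filter_val_lt {M : Type*} [AddCommMonoid M] (f : ℕ → M) (n s : ℕ) :
    ∑ x ∈ (univ.filter fun x : Fin n => x.1 < s)ᶜ, f (x.1 + 1) = ∑ i ∈ Icc (s + 1) n, f i := by
  refine sum_bij (fun x _ => x.1 + 1) (fun x hx => ?_) (fun x _ y _ h => Fin.ext (by omega))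
    (fun i hi => ?_) (fun _ _ => rfl)
  · simp only [compl_filter, not_lt, mem_filter, mem_univ, true_and] at hx
    simp only [mem_Icc]; omega
  · rw [mem_Icc] at hi
    refine ⟨⟨i - 1, by omega⟩, ?_, by simp; omega⟩
    simp only [compl_filter, not_lt, mem_filter, mem_univ, true_and]
    omega

section SStar

variable {p : ℕ → ℝ} {n k : ℕ}

theorem sstar1_spec (hk : 1 ≤ k) (hkn : k ≤ n) (hp : ∀ i ∈ Icc k n, 0 ≤ p i) :
    1 ≤ sstar1 p k n ∧ sstar1 p k n ≤ k ∧
      ((k : ℝ) - sstar1 p k n + 1) * p (sstar1 p k n) ≤ ∑ i ∈ Icc (sstar1 p k n) n, p i := by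
  have hne : {r : ℕ | 1 ≤ r ∧ r ≤ k ∧
      ((k : ℝ) - r + 1) * p r ≤ ∑ i ∈ Icc r n, p i}.Nonempty := by
    refine ⟨k, hk, le_rfl, ?_⟩
    rw [sub_self, zero_add, one_mul]
    exact single_le_sum hp (left_mem_Icc.2 hkn)
  exact Nat.sInf_mem hne

theorem sum_Icc_lt_of_lt_sstar1 {r : ℕ} (hr : 1 ≤ r) (hrk : r ≤ k) (hrs : r < sstar1 p k n) :
    ∑ i ∈ Icc r n, p i < ((k : ℝ) - r + 1) * p r := by
  by_contra! h
  exact Nat.notMem_of_lt_sInf hrs ⟨hr, hrk, h⟩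

theorem sum_Icc_sstar1_lt (hmono : ∀ i j, 1 ≤ i → i ≤ j → j ≤ n → p j ≤ p i)
    (hsk : sstar1 p k n ≤ k) (hkn : k ≤ n) {i : ℕ} (hi : 1 ≤ i) (his : i < sstar1 p k n) :
    ∑ j ∈ Icc (sstar1 p k n) n, p j < ((k : ℝ) - sstar1 p k n + 1) * p i := by
  set s := sstar1 p k n
  have hprev := sum_Icc_lt_of_lt_sstar1 (p := p) (n := n) (k := k) (r := s - 1)
    (by omega) (by omega) (by omega)
  rw [Icc_eq_cons_Ioc (by omega), sum_cons, ← Icc_add_one_left_eq_Ioc,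
    Nat.sub_add_cancel (by omega), Nat.cast_sub (by omega), Nat.cast_one] at hprev
  have hM : (0 : ℝ) ≤ k - s + 1 := by
    have : (s : ℝ) ≤ k := by exact_mod_cast hsk
    linarith
  calc _ < ((k : ℝ) - s + 1) * p (s - 1) := by linarith
    _ ≤ ((k : ℝ) - s + 1) * p i := by gcongr; exact hmono i (s - 1) hi (by omega) (by omega)

theorem MElog_eq (hs : 1 ≤ sstar1 p k n) (hsn : sstar1 p k n ≤ n + 1)
    (hT : ∑ i ∈ Icc (sstar1 p k n) n, p i ≠ 0) (hM : (k : ℝ) - sstar1 p k n + 1 ≠ 0) :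
    MElog p k n = ∑ i ∈ Icc (sstar1 p k n) n, p i * Real.log (1 / p i) +
      (∑ i ∈ Icc (sstar1 p k n) n, p i) *
        Real.log ((∑ i ∈ Icc (sstar1 p k n) n, p i) / ((k : ℝ) - sstar1 p k n + 1)) := by
  rw [MElog, ← sum_Icc_one_add_sum_Icc _ hs hsn, Real.log_div hT hM, one_div, Real.log_inv]
  ring

end SStar

theorem stmt13_general (n k : ℕ) (hk : 1 ≤ k) (hkn : k < n)
    (p : ℕ → ℝ) (hpos : ∀ i ∈ Finset.Icc 1 n, 0 < p i)
    (hmono : ∀ i j, 1 ≤ i → i ≤ j → j ≤ n → p j ≤ p i) :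
    IsLeast
      {v : EReal | ∃ Q : (Fin k → Fin n) → ℝ, IsPMF Q ∧
        v = ∑ x : Fin n, ((p (x.1 + 1) : ℝ) : EReal) * logLossE (coversG Q x)}
      ((MElog p k n : ℝ) : EReal) := by
  obtain ⟨hs1, hsk, hkey⟩ :=
    sstar1_spec hk hkn.le fun i hi => (hpos i (Icc_subset_Icc_left hk hi)).le
  set s := sstar1 p k n
  set T := ∑ i ∈ Icc s n, p i
  have hw (x : Fin n) : 0 < p (x.1 + 1) := hpos _ (mem_Icc.2 ⟨by omega, x.2⟩)
  have hT : 0 < T :=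
    sum_pos (fun i hi => hpos i (Icc_subset_Icc_left hs1 hi)) ⟨s, left_mem_Icc.2 (by omega)⟩
  have hM : 0 < (k : ℝ) - s + 1 := by
    have : (s : ℝ) ≤ k := by exact_mod_cast hsk
    linarith
  set H := univ.filter fun x : Fin n => x.1 < s - 1
  set θ := T / ((k : ℝ) - s + 1)
  have htail (f : ℕ → ℝ) : ∑ x ∈ Hᶜ, f (x.1 + 1) = ∑ i ∈ Icc s n, f i := by
    rw [sum_compl_filter_val_lt, Nat.sub_add_cancel hs1]
  have hvalue : ∑ x : Fin n, p (x.1 + 1) *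
      Real.log (1 / cappedProfile (fun x : Fin n => p (x.1 + 1)) H θ x) = MElog p k n := by
    rw [sum_mul_log_inv_cappedProfile (fun x _ => (hw x).ne') (by positivity),
      htail (fun i => p i * Real.log (1 / p i)), htail p, MElog_eq hs1 (by omega) hT.ne' hM.ne']
  rw [← hvalue]
  refine isLeast_expectedLogLoss_cappedProfile hw (by positivity)
    (fun x hx => ?_) (fun x hx => ?_) ?_
  · rw [mem_filter] at hx
    rw [div_le_iff₀ hM, mul_comm]
    exact (sum_Icc_sstar1_lt hmono hsk hkn.le (by omega) (by omega)).le
  · simp only [H, mem_filter, mem_univ, true_and, not_lt] at hx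
    rw [le_div_iff₀ hM, mul_comm]
    exact (mul_le_mul_of_nonneg_left (hmono s _ hs1 (by omega) (by omega)) hM.le).trans hkey
  · rw [htail, Fin.card_filter_val_lt, min_eq_right (by omega), Nat.cast_sub hs1,
      div_div_cancel₀ hT.ne']
    push_cast
    ring

/-- The minimal expected log-loss under `k` guesses, for a pmf
`p_1 ≥ … ≥ p_n > 0` and `1 ≤ k < n`, equals
`H(X) − H(p_1,…,p_{s*−1}, ∑_{i=s*}^n p_i) − (∑_{i=s*}^n p_i) log (k−s*+1)`. -/
theorem stmt13 (n k : ℕ) (hk : 1 ≤ k) (hkn : k < n)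
    (p : ℕ → ℝ) (hpos : ∀ i ∈ Finset.Icc 1 n, 0 < p i)
    (hmono : ∀ i j, 1 ≤ i → i ≤ j → j ≤ n → p j ≤ p i)
    (hsum : ∑ i ∈ Finset.Icc 1 n, p i = 1) :
    IsLeast
      {v : EReal | ∃ Q : (Fin k → Fin n) → ℝ, IsPMF Q ∧
        v = ∑ x : Fin n, ((p (x.1 + 1) : ℝ) : EReal) * logLossE (coversG Q x)}
      ((MElog p k n : ℝ) : EReal) :=
  stmt13_general n k hk hkn p hpos hmono
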